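/- Let Γ be a finitely generated amenable group with Følner sequence {F(n)}, ρ an action on a compact space V, and α a finite open cover. Then the limit lim_n log S_0(α_{F(n)}) / |F(n)| exists, where α_F = ⋂_{γ∈F} ρ(γ)^{-1}α and S_0(β) is the minimal cardinality of an open cover refining β. -/

import Mathlib

open scoped Classical

variable {V : Type*} [TopologicalSpace V]

/-- A finite open cover of `V`. -/
def IsFinOpenCover (α : Finset (Set V)) : Prop :=
  (∀ A ∈ α, IsOpen A) ∧ ⋃₀ (α : Set (Set V)) = Set.univ

/-- `β` refines `α`. -/
def Refines (β α : Finset (Set V)) : Prop :=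
  ∀ B ∈ β, ∃ A ∈ α, B ⊆ A

/-- `S₀ γ`: the minimal cardinality of a finite open cover refining `γ`. -/
noncomputable def S0 (γ : Finset (Set V)) : ℕ :=
  sInf {n | ∃ δ : Finset (Set V), IsFinOpenCover δ ∧ Refines δ γ ∧ δ.card = n}

/-- The refinement `α_F = ⋂_{γ ∈ F} ρ(γ)⁻¹ α` of a finite open cover `α` under
the action `ρ`: its members are intersections over `F` of pullbacks of members
of `α`. -/
noncomputable def pullCover {Γ : Type*} (ρ : Γ → (V ≃ₜ V)) (F : Finset Γ)
    (α : Finset (Set V)) : Finset (Set V) :=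
  (F.pi fun _ => α).image fun c =>
    ⋂ γ, ⋂ (h : γ ∈ F), (ρ γ : V → V) ⁻¹' c γ h

/-!
Put `f E = log S₀(α_E)`. Pulling an optimal refinement back along `ρ γ` and intersecting two
optimal refinements show that `f` is invariant under right translation of `E` and subadditive,
so the theorem is an instance of the Ornstein–Weiss lemma for such functions.

For the lemma, let `λ` be the `lim inf` of `f (F n) / |F n|` and take sets `T₁, …, T_k` of the
Følner sequence with `f Tᵢ < (λ + η) |Tᵢ|`, each `Tᵢ` almost invariant under left multiplication
by `Tⱼ⁻¹` for `j > i`. A set `A = F m` that is almost invariant under all of them is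
`ε`-quasi-tiled by right translates: stage `i` greedily places `ε`-disjoint translates of `Tᵢ`
in the uncovered part of `A`, and the invariance conditions guarantee that each stage covers a
fixed proportion of `A` as long as a `θ`-fraction remains. After `k` stages subadditivity gives
`f A ≤ (λ + η) |A| / (1 - ε) + θ |A| f {1}`, so the `lim sup` is at most `λ`.
-/

open Finset
open scoped Pointwise FinsetFamily

section OrnsteinWeissLemma

variable {G : Type*} [Group G]

noncomputable def tileInterior (T A : Finset G) : Finset G :=
  (T⁻¹ * A).filter fun a => T * {a} ⊆ A

lemma mem_tileInterior {T A : Finset G} (hT : T.Nonempty) {a : G} :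
    a ∈ tileInterior T A ↔ T * {a} ⊆ A := by
  refine ⟨fun h => (mem_filter.1 h).2, fun h => mem_filter.2 ⟨?_, h⟩⟩
  obtain ⟨t, ht⟩ := hT
  exact mem_mul.2 ⟨t⁻¹, inv_mem_inv ht, t * a, h (mul_mem_mul ht (mem_singleton_self a)), by group⟩

lemma card_tileInterior_le_add {T : Finset G} (hT : T.Nonempty) (A R : Finset G) :
    #(tileInterior T A) ≤ #(tileInterior T R) + #(T⁻¹ * (A \ R)) := by
  refine (card_le_card_sdiff_add_card (t := tileInterior T R)).trans ?_
  rw [add_comm]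
  gcongr
  intro a ha
  rw [Finset.mem_sdiff, mem_tileInterior hT, mem_tileInterior hT] at ha
  obtain ⟨x, hxA, hxR⟩ := not_subset.1 ha.2
  obtain ⟨t, ht, rfl⟩ : ∃ t ∈ T, t * a = x := by simpa [mem_mul] using hxA
  exact mem_mul.2 ⟨t⁻¹, inv_mem_inv ht, t * a, Finset.mem_sdiff.2 ⟨ha.1 hxA, hxR⟩, by group⟩

lemma sum_card_mul_singleton_inter_le (T I U : Finset G) :
    ∑ a ∈ I, #(T * {a} ∩ U) ≤ #T * #U := by
  have hfib : ∀ a, #(T * {a} ∩ U) = #(T.filter fun t => t * a ∈ U) := by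
    intro a
    rw [← card_image_of_injective (T.filter _) (mul_left_injective a)]
    congr 1
    ext x
    simp [mem_mul, ← eq_mul_inv_iff_mul_eq]
  calc ∑ a ∈ I, #(T * {a} ∩ U) = ∑ t ∈ T, #(I.filter fun a => t * a ∈ U) := by
        simp_rw [hfib]
        exact sum_card_bipartiteAbove_eq_sum_card_bipartiteBelow _
    _ ≤ ∑ _t ∈ T, #U := sum_le_sum fun t _ =>
        card_le_card_of_injOn (t * ·) (fun a ha => (mem_filter.1 ha).2)
          (mul_right_injective t).injOn
    _ = #T * #U := by rw [sum_const, smul_eq_mul]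

lemma mul_subset_of_subset_tileInterior {T A C : Finset G} (hT : T.Nonempty)
    (hC : C ⊆ tileInterior T A) : T * C ⊆ A := by
  intro x hx
  obtain ⟨t, ht, c, hc, rfl⟩ := mem_mul.1 hx
  exact (mem_tileInterior hT).1 (hC hc) (mul_mem_mul ht (mem_singleton_self c))

lemma exists_quasiDisjoint_mul_subset {T : Finset G} (hT : T.Nonempty) (R : Finset G) {ε : ℝ}
    (hε : ε < 1) :
    ∃ C : Finset G, T * C ⊆ R ∧ (1 - ε) * (#T * #C) ≤ #(T * C) ∧
      ε * #(tileInterior T R) ≤ #(T * C) := by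
  set I := tileInterior T R
  set P := I.powerset.filter fun C => (1 - ε) * (#T * #C) ≤ (#(T * C) : ℝ)
  obtain ⟨C, hCP, hCmax⟩ := P.exists_max_image (fun C => #(T * C)) ⟨∅, by simp [P]⟩
  rw [mem_filter, mem_powerset] at hCP
  refine ⟨C, mul_subset_of_subset_tileInterior hT hCP.1, hCP.2, ?_⟩
  have hT0 : (0 : ℝ) < #T := by exact_mod_cast hT.card_pos
  -- by maximality of `C`, every translate inside `R` meets `T * C` in at least `ε |T|` points
  have hmeet : ∀ a ∈ I, ε * #T ≤ #(T * {a} ∩ (T * C)) := by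
    intro a ha
    by_contra! hlt
    have hsplit : (#((T * {a}) \ (T * C)) : ℝ) + #(T * {a} ∩ (T * C)) = #T := by
      rw [← Nat.cast_add, card_sdiff_add_card_inter, card_mul_singleton]
    have hgrow : (#(T * insert a C) : ℝ) = #(T * C) + #((T * {a}) \ (T * C)) := by
      rw [insert_eq, mul_union, union_comm, ← union_sdiff_self_eq_union,
        card_union_of_disjoint disjoint_sdiff, Nat.cast_add]
    have hins : insert a C ∈ P := by
      refine mem_filter.2 ⟨mem_powerset.2 (insert_subset ha hCP.1), ?_⟩
      have hcard : (#(insert a C) : ℝ) ≤ #C + 1 := by exact_mod_cast card_insert_le a C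
      nlinarith [hCP.2]
    have : (#(T * insert a C) : ℝ) ≤ #(T * C) := by exact_mod_cast hCmax _ hins
    nlinarith
  have hsum : (#T : ℝ) * (ε * #I) ≤ #T * #(T * C) := by
    calc (#T : ℝ) * (ε * #I) = ∑ _a ∈ I, ε * (#T : ℝ) := by
          rw [sum_const, nsmul_eq_mul]; ring
      _ ≤ ∑ a ∈ I, (#(T * {a} ∩ (T * C)) : ℝ) := by
        gcongr with a ha
        exact hmeet a ha
      _ ≤ #T * #(T * C) := by
        rw [← Nat.cast_sum, ← Nat.cast_mul]
        exact Nat.cast_le.2 (sum_card_mul_singleton_inter_le T I (T * C))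
  exact le_of_mul_le_mul_left hsum hT0

structure IsRightInvariantSubadditive (f : Finset G → ℝ) : Prop where
  map_empty : f ∅ = 0
  map_union_le (E B : Finset G) : f (E ∪ B) ≤ f E + f B
  map_mul_singleton_le (E : Finset G) (g : G) : f (E * {g}) ≤ f E

namespace IsRightInvariantSubadditive

variable {f : Finset G → ℝ} (hf : IsRightInvariantSubadditive f)
include hf

lemma map_mul_le (T C : Finset G) : f (T * C) ≤ #C * f T := by
  induction C using Finset.induction_on with
  | empty => simp [hf.map_empty]
  | insert a C ha ih =>
    rw [card_insert_of_notMem ha, Nat.cast_add_one, insert_eq, mul_union]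
    linarith [hf.map_union_le (T * {a}) (T * C), hf.map_mul_singleton_le T a]

lemma map_le_card_mul (E : Finset G) : f E ≤ #E * f {1} := by
  simpa [singleton_one] using hf.map_mul_le 1 E

end IsRightInvariantSubadditive

section QuasiTiling

variable {f : Finset G → ℝ} {ε θ μ : ℝ}

lemma exists_quasiTiling_step (hf : IsRightInvariantSubadditive f) (hε : 0 < ε) (hεθ : 6 * ε ≤ θ)
    (hθ : θ ≤ 1) (hμ : 0 ≤ μ) {T A X : Finset G} (hT : T.Nonempty) (hfT : f T ≤ μ * #T)
    (hTA : (1 - ε) * #A ≤ #(tileInterior T A)) (hXA : X ⊆ A) (hX : θ * #A < #(A \ X))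
    (hTX : (1 - ε) * #(T⁻¹ * X) ≤ (1 + ε) * #X) :
    ∃ U ⊆ A \ X, ε * θ / 2 * #A ≤ #U ∧ (1 - ε) * f U ≤ μ * #U ∧
      ∀ K : Finset G, #(K * T) ≤ (1 + ε) * #T → (1 - ε) * #(K * U) ≤ (1 + ε) * #U := by
  obtain ⟨C, hCX, hCdisj, hCint⟩ :=
    exists_quasiDisjoint_mul_subset hT (A \ X) (ε := ε) (by linarith)
  have hC : (0 : ℝ) ≤ #C := Nat.cast_nonneg _
  refine ⟨T * C, hCX, ?_, ?_, fun K hK => ?_⟩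
  · have hint : (#(tileInterior T A) : ℝ) ≤ #(tileInterior T (A \ X)) + #(T⁻¹ * X) := by
      have := card_tileInterior_le_add hT A (A \ X)
      rw [Finset.sdiff_sdiff_eq_self hXA] at this
      exact_mod_cast this
    have hAX : (#(A \ X) : ℝ) + #X = #A := by exact_mod_cast card_sdiff_add_card_eq_card hXA
    -- `X` expands little under `T⁻¹`, so removing it cannot eat much of the `T`-interior of `A`
    have hRint : θ / 2 * #A ≤ #(tileInterior T (A \ X)) := by
      nlinarith [mul_le_mul_of_nonneg_left hint (by linarith : (0 : ℝ) ≤ 1 - ε)]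
    nlinarith
  · have := hf.map_mul_le T C
    nlinarith [mul_le_mul_of_nonneg_left hfT hC]
  · have hKTC : (#(K * (T * C)) : ℝ) ≤ #(K * T) * #C := by
      rw [← mul_assoc]; exact_mod_cast card_mul_le
    nlinarith [mul_le_mul_of_nonneg_right hK hC]

/-- `X` is the part of `A` covered by earlier stages, and the hypotheses on it are the
invariants of the greedy construction; each tile of `L` covers a further `εθ/2`-proportion
of `A` as long as more than `θ |A|` is uncovered. -/
lemma exists_quasiTiling (hf : IsRightInvariantSubadditive f) (hε : 0 < ε) (hεθ : 6 * ε ≤ θ)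
    (hθ : θ ≤ 1) (hμ : 0 ≤ μ) {A : Finset G} (L : List (Finset G))
    (hL : ∀ T ∈ L, T.Nonempty ∧ f T ≤ μ * #T ∧ (1 - ε) * #A ≤ #(tileInterior T A))
    (hLexp : L.Pairwise fun S T => (#(T⁻¹ * S) : ℝ) ≤ (1 + ε) * #S)
    {X : Finset G} (hXA : X ⊆ A) (hfX : (1 - ε) * (f A - f (A \ X)) ≤ μ * #X)
    (hLX : ∀ T ∈ L, (1 - ε) * #(T⁻¹ * X) ≤ (1 + ε) * #X) :
    ∃ Y ⊆ A, (1 - ε) * (f A - f (A \ Y)) ≤ μ * #A ∧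
      (#(A \ Y) ≤ θ * #A ∨ #X + L.length * (ε * θ / 2 * #A) ≤ #Y) := by
  induction L generalizing X with
  | nil =>
    have : (#X : ℝ) ≤ #A := by exact_mod_cast card_le_card hXA
    exact ⟨X, hXA, hfX.trans (by nlinarith), Or.inr (by simp)⟩
  | cons T L ih =>
    rw [List.pairwise_cons] at hLexp
    obtain ⟨hT, hfT, hTA⟩ := hL T List.mem_cons_self
    by_cases hsmall : #(A \ X) ≤ θ * #A
    · have : (#X : ℝ) ≤ #A := by exact_mod_cast card_le_card hXA
      exact ⟨X, hXA, hfX.trans (by nlinarith), Or.inl hsmall⟩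
    obtain ⟨U, hUX, hUcard, hfU, hUexp⟩ := exists_quasiTiling_step hf hε hεθ hθ hμ hT hfT hTA hXA
      (not_le.1 hsmall) (hLX T List.mem_cons_self)
    have hXU : (#(X ∪ U) : ℝ) = #X + #U := by
      rw [card_union_of_disjoint (disjoint_of_subset_right hUX disjoint_sdiff)]; push_cast; ring
    have hfXU : (1 - ε) * (f A - f (A \ (X ∪ U))) ≤ μ * #(X ∪ U) := by
      have : f (A \ X) ≤ f (A \ (X ∪ U)) + f U := by
        have := hf.map_union_le ((A \ X) \ U) U
        rwa [sdiff_union_of_subset hUX, sdiff_sdiff_left, sup_eq_union] at this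
      nlinarith
    obtain ⟨Y, hYA, hfY, hprog⟩ := ih (fun T' h => hL T' (List.mem_cons_of_mem _ h)) hLexp.2
      (union_subset hXA (hUX.trans sdiff_subset)) hfXU fun T' hT' => by
        have h1 : (#(T'⁻¹ * (X ∪ U)) : ℝ) ≤ #(T'⁻¹ * X) + #(T'⁻¹ * U) := by
          rw [mul_union]; exact_mod_cast card_union_le _ _
        nlinarith [hLX T' (List.mem_cons_of_mem _ hT'), hUexp _ (hLexp.1 T' hT')]
    refine ⟨Y, hYA, hfY, hprog.imp_right fun h => ?_⟩
    simp only [List.length_cons, Nat.cast_add_one] at h ⊢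
    linarith

end QuasiTiling

section Folner

open Filter Topology

structure IsLeftFolner (F : ℕ → Finset G) : Prop where
  nonempty (n : ℕ) : (F n).Nonempty
  tendsto_card_smul_sdiff_div (g : G) :
    Tendsto (fun n => (#(g • F n \ F n) : ℝ) / #(F n)) atTop (𝓝 0)

lemma card_mul_smul_sdiff_le (g h : G) (F : Finset G) :
    #((g * h) • F \ F) ≤ #(g • F \ F) + #(h • F \ F) := by
  calc #((g * h) • F \ F) ≤ #((g • F \ F) ∪ g • (h • F \ F)) := by
        refine card_le_card fun x hx => ?_
        rw [smul_finset_sdiff, ← mul_smul]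
        simp only [Finset.mem_union, Finset.mem_sdiff] at hx ⊢
        tauto
    _ ≤ #(g • F \ F) + #(h • F \ F) := by
        rw [← card_smul_finset g (h • F \ F)]
        exact card_union_le _ _

lemma card_inv_smul_sdiff (g : G) (F : Finset G) : #(g⁻¹ • F \ F) = #(g • F \ F) :=
  calc #(g⁻¹ • F \ F) = #(g⁻¹ • (F \ g • F)) := by rw [smul_finset_sdiff, inv_smul_smul]
    _ = #(F \ g • F) := card_smul_finset _ _
    _ = #(g • F \ F) := card_sdiff_comm (card_smul_finset g F).symm

lemma card_smul_sdiff_le_card_filter (g : G) (F : Finset G) :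
    #(g • F \ F) ≤ #(F.filter fun x => g * x ∉ F) := by
  refine card_le_card_of_injOn (g⁻¹ * ·) (fun y hy => ?_) (mul_right_injective _).injOn
  obtain ⟨hy, hyF⟩ := Finset.mem_sdiff.1 hy
  obtain ⟨x, hx, rfl⟩ := mem_smul_finset.1 hy
  simpa [hx] using hyF

lemma IsLeftFolner.of_closure_eq_top {H : Finset G} (hH : Subgroup.closure (H : Set G) = ⊤)
    {F : ℕ → Finset G} (hne : ∀ n, (F n).Nonempty)
    (hF : Tendsto (fun n => (#((F n).filter fun γ => ∃ h ∈ H, h * γ ∉ F n) : ℝ) / #(F n))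
      atTop (𝓝 0)) :
    IsLeftFolner F := by
  refine ⟨hne, fun g => ?_⟩
  have hnonneg : ∀ g n, 0 ≤ (#(g • F n \ F n) : ℝ) / #(F n) := fun _ _ => by positivity
  induction (hH ▸ Subgroup.mem_top g : g ∈ Subgroup.closure (H : Set G))
    using Subgroup.closure_induction with
  | mem h hh =>
    refine squeeze_zero (hnonneg h) (fun n => div_le_div_of_nonneg_right ?_ (by positivity)) hF
    refine Nat.cast_le.2 ((card_smul_sdiff_le_card_filter h _).trans (card_le_card ?_))
    exact fun x hx => mem_filter.2 ⟨(mem_filter.1 hx).1, h, hh, (mem_filter.1 hx).2⟩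
  | one => simp
  | mul g h _ _ hg hh =>
    refine squeeze_zero (hnonneg _) (fun n => ?_) (by simpa using hg.add hh)
    rw [← add_div]
    exact div_le_div_of_nonneg_right (by exact_mod_cast card_mul_smul_sdiff_le g h _)
      (by positivity)
  | inv g _ hg => simpa only [card_inv_smul_sdiff] using hg

lemma card_mul_le_card_add_sum (K F : Finset G) : #(K * F) ≤ #F + ∑ g ∈ K, #(g • F \ F) := by
  calc #(K * F) ≤ #(F ∪ K.biUnion fun g => g • F \ F) := by
        refine card_le_card fun x hx => ?_
        obtain ⟨g, hg, y, hy, rfl⟩ := Finset.mem_mul.1 hx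
        by_cases hgy : g * y ∈ F
        · exact mem_union_left _ hgy
        · exact mem_union_right _ (mem_biUnion.2 ⟨g, hg,
            Finset.mem_sdiff.2 ⟨smul_mem_smul_finset hy, hgy⟩⟩)
    _ ≤ #F + ∑ g ∈ K, #(g • F \ F) := (card_union_le _ _).trans (by gcongr; exact card_biUnion_le)

lemma card_le_card_tileInterior_add {T : Finset G} {t₀ : G} (ht₀ : t₀ ∈ T) (F : Finset G) :
    #F ≤ #(tileInterior T F) + ∑ t ∈ T, #((t * t₀⁻¹) • F \ F) := by
  calc #F = #(t₀⁻¹ • F) := (card_smul_finset _ _).symm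
    _ ≤ #(tileInterior T F ∪ T.biUnion fun t => t⁻¹ • ((t * t₀⁻¹) • F \ F)) := by
        refine card_le_card fun a ha => ?_
        rw [mem_inv_smul_finset_iff, smul_eq_mul] at ha
        by_cases hT : T * {a} ⊆ F
        · exact mem_union_left _ ((mem_tileInterior ⟨t₀, ht₀⟩).2 hT)
        obtain ⟨x, hx, hxF⟩ := not_subset.1 hT
        obtain ⟨t, ht, rfl⟩ : ∃ t ∈ T, t * a = x := by simpa [Finset.mem_mul] using hx
        refine mem_union_right _ (mem_biUnion.2 ⟨t, ht, ?_⟩)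
        rw [mem_inv_smul_finset_iff, smul_eq_mul, Finset.mem_sdiff, mem_smul_finset]
        exact ⟨⟨t₀ * a, ha, by simp [mul_assoc]⟩, hxF⟩
    _ ≤ #(tileInterior T F) + ∑ t ∈ T, #((t * t₀⁻¹) • F \ F) := by
        refine (card_union_le _ _).trans (Nat.add_le_add_left (card_biUnion_le.trans_eq ?_) _)
        simp_rw [card_smul_finset]

variable {F : ℕ → Finset G} (hF : IsLeftFolner F)
include hF

lemma IsLeftFolner.eventually_sum_card_smul_sdiff_le {ι : Type*} (s : Finset ι) (φ : ι → G)
    {δ : ℝ} (hδ : 0 < δ) :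
    ∀ᶠ n in atTop, ∑ i ∈ s, (#(φ i • F n \ F n) : ℝ) ≤ δ * #(F n) := by
  have h : Tendsto (fun n => ∑ i ∈ s, (#(φ i • F n \ F n) : ℝ) / #(F n)) atTop (𝓝 0) := by
    simpa using tendsto_finsetSum s fun i _ => hF.tendsto_card_smul_sdiff_div (φ i)
  filter_upwards [h.eventually_lt_const hδ] with n hn
  rw [← sum_div, div_lt_iff₀ (by exact_mod_cast (hF.nonempty n).card_pos)] at hn
  exact hn.le

lemma IsLeftFolner.eventually_card_mul_le (K : Finset G) {δ : ℝ} (hδ : 0 < δ) :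
    ∀ᶠ n in atTop, (#(K * F n) : ℝ) ≤ (1 + δ) * #(F n) := by
  filter_upwards [hF.eventually_sum_card_smul_sdiff_le K id hδ] with n hn
  have : (#(K * F n) : ℝ) ≤ #(F n) + ∑ g ∈ K, (#(g • F n \ F n) : ℝ) := by
    exact_mod_cast card_mul_le_card_add_sum K (F n)
  simp only [id] at hn
  linarith

lemma IsLeftFolner.eventually_le_card_tileInterior {T : Finset G} (hT : T.Nonempty) {δ : ℝ}
    (hδ : 0 < δ) : ∀ᶠ n in atTop, (1 - δ) * #(F n) ≤ #(tileInterior T (F n)) := by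
  obtain ⟨t₀, ht₀⟩ := hT
  filter_upwards [hF.eventually_sum_card_smul_sdiff_le T (· * t₀⁻¹) hδ] with n hn
  have : (#(F n) : ℝ) ≤ #(tileInterior T (F n)) + ∑ t ∈ T, (#((t * t₀⁻¹) • F n \ F n) : ℝ) := by
    exact_mod_cast card_le_card_tileInterior_add ht₀ (F n)
  linarith

lemma IsLeftFolner.exists_tiles {P : ℕ → Prop} (hP : ∃ᶠ n in atTop, P n) {δ : ℝ} (hδ : 0 < δ)
    (k : ℕ) :
    ∃ L : List (Finset G), L.length = k ∧ (∀ T ∈ L, ∃ n, P n ∧ F n = T) ∧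
      L.Pairwise fun S T => (#(T⁻¹ * S) : ℝ) ≤ (1 + δ) * #S := by
  induction k with
  | zero => exact ⟨[], rfl, by simp, List.Pairwise.nil⟩
  | succ k ih =>
    obtain ⟨L, hlen, hLP, hpair⟩ := ih
    have hev : ∀ᶠ n in atTop, ∀ T ∈ L, (#(T⁻¹ * F n) : ℝ) ≤ (1 + δ) * #(F n) :=
      (eventually_all_finite L.finite_toSet).2 fun T _ => hF.eventually_card_mul_le T⁻¹ hδ
    obtain ⟨n, hPn, hn⟩ := (hP.and_eventually hev).exists
    refine ⟨F n :: L, by simp [hlen], fun T hT => ?_, List.Pairwise.cons hn hpair⟩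
    rcases List.mem_cons.1 hT with rfl | hT
    exacts [⟨n, hPn, rfl⟩, hLP T hT]

end Folner

section Limit

open Filter Topology

variable {F : ℕ → Finset G} {f : Finset G → ℝ}

lemma IsLeftFolner.eventually_le_of_frequently (hF : IsLeftFolner F)
    (hf : IsRightInvariantSubadditive f) (hf0 : ∀ E, 0 ≤ f E) {μ ε : ℝ}
    (hμ : ∃ᶠ n in atTop, f (F n) < μ * #(F n)) (hε : 0 < ε) (hε6 : 6 * ε ≤ 1) :
    ∀ᶠ n in atTop, (1 - ε) * f (F n) ≤ (μ + 6 * ε * f {1}) * #(F n) := by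
  have hμ0 : 0 ≤ μ := by
    obtain ⟨n, hn⟩ := hμ.exists
    by_contra! h
    nlinarith [hf0 (F n), (#(F n)).cast_nonneg (α := ℝ)]
  obtain ⟨k, hk⟩ := exists_nat_ge (1 / (ε * (6 * ε) / 2))
  obtain ⟨L, rfl, hLF, hLexp⟩ := hF.exists_tiles hμ hε k
  have hLint : ∀ᶠ n in atTop, ∀ T ∈ L, (1 - ε) * #(F n) ≤ #(tileInterior T (F n)) :=
    (eventually_all_finite L.finite_toSet).2 fun T hT => by
      obtain ⟨m, -, rfl⟩ := hLF T hT
      exact hF.eventually_le_card_tileInterior (hF.nonempty m) hε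
  filter_upwards [hLint] with n hn
  have hL : ∀ T ∈ L, T.Nonempty ∧ f T ≤ μ * #T ∧ (1 - ε) * #(F n) ≤ #(tileInterior T (F n)) := by
    intro T hT
    obtain ⟨m, hm, rfl⟩ := hLF T hT
    exact ⟨hF.nonempty m, hm.le, hn _ hT⟩
  obtain ⟨Y, hYA, hfY, hprog⟩ := exists_quasiTiling hf hε le_rfl hε6 hμ0 L hL hLexp
    (empty_subset _) (by simp) (by simp)
  have hYcard : (#(F n \ Y) : ℝ) + #Y = #(F n) := by
    exact_mod_cast card_sdiff_add_card_eq_card hYA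
  have hsmall : (#(F n \ Y) : ℝ) ≤ 6 * ε * #(F n) := by
    refine hprog.elim id fun h => ?_
    rw [card_empty, Nat.cast_zero, zero_add] at h
    have hk' : 1 ≤ (L.length : ℝ) * (ε * (6 * ε) / 2) := by rwa [div_le_iff₀ (by positivity)] at hk
    have := mul_le_mul_of_nonneg_right hk' (#(F n)).cast_nonneg (α := ℝ)
    nlinarith [mul_nonneg hε.le (#(F n)).cast_nonneg (α := ℝ)]
  have hrest : f (F n \ Y) ≤ 6 * ε * #(F n) * f {1} :=
    (hf.map_le_card_mul _).trans (mul_le_mul_of_nonneg_right hsmall (hf0 {1}))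
  have : 0 ≤ ε * (6 * ε * #(F n) * f {1}) := by have := hf0 {1}; positivity
  nlinarith

/-- The Ornstein–Weiss lemma. -/
theorem IsLeftFolner.exists_tendsto_div_card (hF : IsLeftFolner F)
    (hf : IsRightInvariantSubadditive f) (hf0 : ∀ E, 0 ≤ f E) :
    ∃ L : ℝ, Tendsto (fun n => f (F n) / #(F n)) atTop (𝓝 L) := by
  set u : ℕ → ℝ := fun n => f (F n) / #(F n)
  have hcard (n : ℕ) : (0 : ℝ) < #(F n) := by exact_mod_cast (hF.nonempty n).card_pos
  have hbdd : IsBoundedUnder (· ≤ ·) atTop u := isBoundedUnder_of ⟨f {1}, fun n =>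
    div_le_of_le_mul₀ (hcard n).le (hf0 _) (by rw [mul_comm]; exact hf.map_le_card_mul _)⟩
  have hbdd' : IsBoundedUnder (· ≥ ·) atTop u :=
    isBoundedUnder_of ⟨0, fun n => div_nonneg (hf0 _) (hcard n).le⟩
  set l := liminf u atTop
  have hlimsup (t : ℝ) (ht0 : 0 < t) (ht1 : t ≤ 1) :
      limsup u atTop ≤ (l + t + t * f {1}) / (1 - t / 6) := by
    have hfreq : ∃ᶠ n in atTop, f (F n) < (l + t) * #(F n) :=
      (frequently_lt_of_liminf_lt hbdd.isCoboundedUnder_ge (by linarith : l < l + t)).mono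
        fun n hn => (div_lt_iff₀ (hcard n)).1 hn
    refine limsup_le_of_le hbdd'.isCoboundedUnder_le ?_
    filter_upwards [hF.eventually_le_of_frequently hf hf0 hfreq (by positivity : 0 < t / 6)
      (by linarith)] with n hn
    rw [div_le_div_iff₀ (hcard n) (by linarith)]
    linarith
  have hlim : Tendsto (fun n : ℕ => (l + 1 / (n + 1) + 1 / (n + 1) * f {1}) / (1 - 1 / (n + 1) / 6))
      atTop (𝓝 l) := by
    have h : Tendsto (fun n : ℕ => 1 / ((n : ℝ) + 1)) atTop (𝓝 0) :=
      tendsto_one_div_add_atTop_nhds_zero_nat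
    have hlim := (((tendsto_const_nhds (x := l)).add h).add (h.mul_const (f {1}))).div
      ((tendsto_const_nhds (x := (1 : ℝ))).sub (h.div_const 6)) (by norm_num)
    rwa [show (l + 0 + 0 * f {1}) / (1 - 0 / 6) = l by ring] at hlim
  refine ⟨l, tendsto_of_le_liminf_of_limsup_le le_rfl ?_ hbdd hbdd'⟩
  refine ge_of_tendsto' hlim fun n => hlimsup (1 / (n + 1)) Nat.one_div_pos_of_nat ?_
  rw [div_le_one (by positivity)]
  linarith [(n.cast_nonneg : (0 : ℝ) ≤ n)]

end Limit

end OrnsteinWeissLemma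

section Covers

variable {W : Type*} [TopologicalSpace W]

lemma IsFinOpenCover.exists_mem {α : Finset (Set V)} (hα : IsFinOpenCover α) (v : V) :
    ∃ A ∈ α, v ∈ A := by
  have hv : v ∈ ⋃₀ (α : Set (Set V)) := by rw [hα.2]; trivial
  simpa using hv

lemma Refines.refl {X : Type*} (α : Finset (Set X)) : Refines α α := fun A hA => ⟨A, hA, subset_rfl⟩

lemma Refines.trans {X : Type*} {α β γ : Finset (Set X)} (hγβ : Refines γ β) (hβα : Refines β α) :
    Refines γ α := fun C hC => by
  obtain ⟨B, hB, hCB⟩ := hγβ C hC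
  obtain ⟨A, hA, hBA⟩ := hβα B hB
  exact ⟨A, hA, hCB.trans hBA⟩

lemma S0_le_card_of_refines {β δ : Finset (Set V)} (hδ : IsFinOpenCover δ) (h : Refines δ β) :
    S0 β ≤ #δ :=
  Nat.sInf_le ⟨δ, hδ, h, rfl⟩

lemma exists_refines_card_eq_S0 {β : Finset (Set V)} (hβ : IsFinOpenCover β) :
    ∃ δ, IsFinOpenCover δ ∧ Refines δ β ∧ #δ = S0 β :=
  Nat.sInf_mem (s := {n | ∃ δ, IsFinOpenCover δ ∧ Refines δ β ∧ #δ = n})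
    ⟨_, β, hβ, Refines.refl β, rfl⟩

lemma S0_le_S0_of_refines {β γ : Finset (Set V)} (hγ : IsFinOpenCover γ) (h : Refines γ β) :
    S0 β ≤ S0 γ := by
  obtain ⟨δ, hδ, hδγ, hcard⟩ := exists_refines_card_eq_S0 hγ
  exact hcard ▸ S0_le_card_of_refines hδ (hδγ.trans h)

lemma IsFinOpenCover.infs {β γ : Finset (Set V)} (hβ : IsFinOpenCover β)
    (hγ : IsFinOpenCover γ) : IsFinOpenCover (β ⊼ γ) := by
  refine ⟨fun S hS => ?_, Set.eq_univ_of_forall fun v => ?_⟩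
  · obtain ⟨B, hB, C, hC, rfl⟩ := mem_infs.1 hS
    exact (hβ.1 B hB).inter (hγ.1 C hC)
  · obtain ⟨B, hB, hvB⟩ := hβ.exists_mem v
    obtain ⟨C, hC, hvC⟩ := hγ.exists_mem v
    exact Set.mem_sUnion.2 ⟨B ∩ C, mem_coe.2 (inf_mem_infs hB hC), hvB, hvC⟩

lemma Refines.infs {X : Type*} {β γ δ η : Finset (Set X)} (hδ : Refines δ β) (hη : Refines η γ) :
    Refines (δ ⊼ η) (β ⊼ γ) := fun S hS => by
  obtain ⟨D, hD, E, hE, rfl⟩ := mem_infs.1 hS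
  obtain ⟨B, hB, hDB⟩ := hδ D hD
  obtain ⟨C, hC, hEC⟩ := hη E hE
  exact ⟨B ∩ C, inf_mem_infs hB hC, Set.inter_subset_inter hDB hEC⟩

lemma S0_infs_le {β γ : Finset (Set V)} (hβ : IsFinOpenCover β) (hγ : IsFinOpenCover γ) :
    S0 (β ⊼ γ) ≤ S0 β * S0 γ := by
  obtain ⟨δ, hδ, hδβ, hδcard⟩ := exists_refines_card_eq_S0 hβ
  obtain ⟨η, hη, hηγ, hηcard⟩ := exists_refines_card_eq_S0 hγ
  rw [← hδcard, ← hηcard]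
  exact (S0_le_card_of_refines (hδ.infs hη) (hδβ.infs hηγ)).trans (card_infs_le _ _)

lemma IsFinOpenCover.image_preimage {g : V → W} (hg : Continuous g) {β : Finset (Set W)}
    (hβ : IsFinOpenCover β) : IsFinOpenCover (β.image (g ⁻¹' ·)) := by
  refine ⟨fun S hS => ?_, Set.eq_univ_of_forall fun v => ?_⟩
  · obtain ⟨B, hB, rfl⟩ := mem_image.1 hS
    exact (hβ.1 B hB).preimage hg
  · obtain ⟨B, hB, hvB⟩ := hβ.exists_mem (g v)
    exact Set.mem_sUnion.2 ⟨g ⁻¹' B, mem_coe.2 (mem_image_of_mem _ hB), hvB⟩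

lemma Refines.image_preimage {X Y : Type*} {β δ : Finset (Set Y)} (h : Refines δ β) (g : X → Y) :
    Refines (δ.image (g ⁻¹' ·)) (β.image (g ⁻¹' ·)) := fun S hS => by
  obtain ⟨D, hD, rfl⟩ := mem_image.1 hS
  obtain ⟨B, hB, hDB⟩ := h D hD
  exact ⟨g ⁻¹' B, mem_image_of_mem _ hB, Set.preimage_mono hDB⟩

lemma S0_image_preimage_le {g : V → W} (hg : Continuous g) {β : Finset (Set W)}
    (hβ : IsFinOpenCover β) : S0 (β.image (g ⁻¹' ·)) ≤ S0 β := by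
  obtain ⟨δ, hδ, hδβ, hcard⟩ := exists_refines_card_eq_S0 hβ
  calc S0 (β.image (g ⁻¹' ·)) ≤ #(δ.image (g ⁻¹' ·)) :=
        S0_le_card_of_refines (hδ.image_preimage hg) (hδβ.image_preimage g)
    _ ≤ S0 β := hcard ▸ card_image_le

end Covers

lemma log_natCast_le_add_of_le_mul {a b c : ℕ} (h : a ≤ b * c) :
    Real.log a ≤ Real.log b + Real.log c := by
  rcases Nat.eq_zero_or_pos a with rfl | ha
  · simpa using add_nonneg (Real.log_natCast_nonneg b) (Real.log_natCast_nonneg c)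
  obtain ⟨hb, hc⟩ := CanonicallyOrderedAdd.mul_pos.1 (ha.trans_le h)
  rw [← Real.log_mul (by positivity) (by positivity)]
  exact Real.log_le_log (by positivity) (by exact_mod_cast h)

section PullCover

variable {Γ : Type*} (ρ : Γ → V ≃ₜ V) {α : Finset (Set V)}

lemma mem_pullCover {F : Finset Γ} {S : Set V} :
    S ∈ pullCover ρ F α ↔ ∃ c : Γ → Set V, (∀ γ ∈ F, c γ ∈ α) ∧ ⋂ γ ∈ F, ρ γ ⁻¹' c γ = S := by
  simp only [pullCover, mem_image, mem_pi]
  constructor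
  · rintro ⟨c, hc, rfl⟩
    refine ⟨fun γ => if h : γ ∈ F then c γ h else ∅, fun γ h => by simpa [h] using hc γ h, ?_⟩
    ext v
    simp +contextual
  · rintro ⟨c, hc, rfl⟩
    exact ⟨fun γ _ => c γ, hc, rfl⟩

lemma isFinOpenCover_pullCover (hα : IsFinOpenCover α) (F : Finset Γ) :
    IsFinOpenCover (pullCover ρ F α) := by
  refine ⟨fun S hS => ?_, Set.eq_univ_of_forall fun v => ?_⟩
  · obtain ⟨c, hc, rfl⟩ := (mem_pullCover ρ).1 hS
    exact isOpen_biInter_finset fun γ hγ => (hα.1 _ (hc γ hγ)).preimage (ρ γ).continuous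
  · choose c hc hvc using fun γ => hα.exists_mem (ρ γ v)
    exact Set.mem_sUnion.2 ⟨_, mem_coe.2 ((mem_pullCover ρ).2 ⟨c, fun γ _ => hc γ, rfl⟩),
      Set.mem_iInter₂.2 fun γ _ => hvc γ⟩

lemma refines_infs_pullCover_union (E B : Finset Γ) :
    Refines (pullCover ρ E α ⊼ pullCover ρ B α) (pullCover ρ (E ∪ B) α) := fun S hS => by
  obtain ⟨Y, hY, Z, hZ, rfl⟩ := mem_infs.1 hS
  obtain ⟨c, hc, rfl⟩ := (mem_pullCover ρ).1 hY
  obtain ⟨d, hd, rfl⟩ := (mem_pullCover ρ).1 hZ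
  refine ⟨_, (mem_pullCover ρ).2 ⟨fun γ => if γ ∈ E then c γ else d γ, fun γ hγ => ?_, rfl⟩,
    fun v hv => ?_⟩
  · dsimp only
    split_ifs with h
    exacts [hc γ h, hd γ ((Finset.mem_union.1 hγ).resolve_left h)]
  · simp only [Set.inf_eq_inter, Set.mem_inter_iff, Set.mem_iInter₂, Set.mem_preimage] at hv ⊢
    intro γ hγ
    split_ifs with h
    exacts [hv.1 γ h, hv.2 γ ((Finset.mem_union.1 hγ).resolve_left h)]

lemma S0_pullCover_union_le (hα : IsFinOpenCover α) (E B : Finset Γ) :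
    S0 (pullCover ρ (E ∪ B) α) ≤ S0 (pullCover ρ E α) * S0 (pullCover ρ B α) := by
  have hE := isFinOpenCover_pullCover ρ hα E
  have hB := isFinOpenCover_pullCover ρ hα B
  exact (S0_le_S0_of_refines (hE.infs hB) (refines_infs_pullCover_union ρ E B)).trans
    (S0_infs_le hE hB)

lemma S0_pullCover_empty_le_one (hα : IsFinOpenCover α) : S0 (pullCover ρ ∅ α) ≤ 1 :=
  (S0_le_card_of_refines (isFinOpenCover_pullCover ρ hα ∅) (Refines.refl _)).trans
    (card_image_le.trans (by simp))

variable [Group Γ] (hρmul : ∀ γ γ' v, ρ (γ * γ') v = ρ γ (ρ γ' v))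
include hρmul

lemma refines_image_preimage_pullCover (E : Finset Γ) (γ : Γ) :
    Refines ((pullCover ρ E α).image (ρ γ ⁻¹' ·)) (pullCover ρ (E * {γ}) α) := fun S hS => by
  obtain ⟨Y, hY, rfl⟩ := mem_image.1 hS
  obtain ⟨c, hc, rfl⟩ := (mem_pullCover ρ).1 hY
  refine ⟨_, (mem_pullCover ρ).2 ⟨fun x => c (x * γ⁻¹), fun x hx => ?_, rfl⟩, fun v hv => ?_⟩
  · obtain ⟨e, he, rfl⟩ : ∃ e ∈ E, e * γ = x := by simpa [Finset.mem_mul] using hx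
    simpa using hc e he
  · simp only [Set.mem_preimage, Set.mem_iInter₂] at hv ⊢
    intro x hx
    obtain ⟨e, he, rfl⟩ : ∃ e ∈ E, e * γ = x := by simpa [Finset.mem_mul] using hx
    simpa [hρmul] using hv e he

lemma S0_pullCover_mul_singleton_le (hα : IsFinOpenCover α) (E : Finset Γ) (γ : Γ) :
    S0 (pullCover ρ (E * {γ}) α) ≤ S0 (pullCover ρ E α) := by
  have hE := isFinOpenCover_pullCover ρ hα E
  exact (S0_le_S0_of_refines (hE.image_preimage (ρ γ).continuous)
    (refines_image_preimage_pullCover ρ hρmul E γ)).trans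
    (S0_image_preimage_le (ρ γ).continuous hE)

lemma isRightInvariantSubadditive_log_S0_pullCover (hα : IsFinOpenCover α) :
    IsRightInvariantSubadditive fun E : Finset Γ => Real.log (S0 (pullCover ρ E α)) where
  map_empty := by
    rcases Nat.le_one_iff_eq_zero_or_eq_one.1 (S0_pullCover_empty_le_one ρ hα) with h | h <;>
      simp [h]
  map_union_le E B := log_natCast_le_add_of_le_mul (S0_pullCover_union_le ρ hα E B)
  map_mul_singleton_le E γ := by
    simpa using log_natCast_le_add_of_le_mul (c := 1)
      (by simpa using S0_pullCover_mul_singleton_le ρ hρmul hα E γ)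

end PullCover

theorem ornstein_weiss_limit_exists_general {Γ : Type*} [Group Γ]
    (H : Finset Γ) (hHgen : Subgroup.closure (H : Set Γ) = ⊤)
    (F : ℕ → Finset Γ)
    (hne : ∀ n, (F n).Nonempty)
    (hFolner : Filter.Tendsto
      (fun n => (((F n).filter fun γ => ∃ h ∈ H, h * γ ∉ F n).card : ℝ) / ((F n).card : ℝ))
      Filter.atTop (nhds 0))
    {V : Type*} [TopologicalSpace V]
    (ρ : Γ → (V ≃ₜ V))
    (hρmul : ∀ γ γ' v, ρ (γ * γ') v = ρ γ (ρ γ' v))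
    (α : Finset (Set V)) (hα : IsFinOpenCover α) :
    ∃ L : ℝ, Filter.Tendsto
      (fun n => Real.log (S0 (pullCover ρ (F n) α)) / ((F n).card : ℝ))
      Filter.atTop (nhds L) :=
  (IsLeftFolner.of_closure_eq_top hHgen hne hFolner).exists_tendsto_div_card
    (isRightInvariantSubadditive_log_S0_pullCover ρ hρmul hα) fun _ => Real.log_natCast_nonneg _

/-- Ornstein–Weiss: for a finitely generated amenable group `Γ` acting by
homeomorphisms on a compact Hausdorff space `V`, and a finite open cover `α`,
the limit `lim_n log S₀(α_{F n}) / |F n|` along a Følner sequence exists. -/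
theorem ornstein_weiss_limit_exists {Γ : Type*} [Group Γ]
    (H : Finset Γ) (hHgen : Subgroup.closure (H : Set Γ) = ⊤) (hHinv : ∀ h ∈ H, h⁻¹ ∈ H)
    (F : ℕ → Finset Γ) (hmono : Monotone F) (hexh : ∀ γ : Γ, ∃ n, γ ∈ F n)
    (hne : ∀ n, (F n).Nonempty)
    (hFolner : Filter.Tendsto
      (fun n => (((F n).filter fun γ => ∃ h ∈ H, h * γ ∉ F n).card : ℝ) / ((F n).card : ℝ))
      Filter.atTop (nhds 0))
    {V : Type*} [TopologicalSpace V] [CompactSpace V] [T2Space V]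
    (ρ : Γ → (V ≃ₜ V))
    (hρone : ∀ v, ρ 1 v = v) (hρmul : ∀ γ γ' v, ρ (γ * γ') v = ρ γ (ρ γ' v))
    (α : Finset (Set V)) (hα : IsFinOpenCover α) :
    ∃ L : ℝ, Filter.Tendsto
      (fun n => Real.log (S0 (pullCover ρ (F n) α)) / ((F n).card : ℝ))
      Filter.atTop (nhds L) :=
  ornstein_weiss_limit_exists_general H hHgen F hne hFolner ρ hρmul α hα
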